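/- arXiv:1903.08758 — 2 statements merged into one kernel-verified Lean document; each statement's English description precedes it below -/
import Mathlib

section
/- For δ ∈ {α, β} and a weight μ of SL₃, one has μ - δ ∈ W_p·μ (affine Weyl group dot action) if and only if p divides ⟨μ, δ∨⟩. Concretely for μ = (x,y): (x,y) - α ∈ W_p·(x,y) iff p ∣ x, and (x,y) - β ∈ W_p·(x,y) iff p ∣ y. -/
/-- The affine reflection `s_{α, n p}` (for the root `α`, `⟨(x,y), α∨⟩ = x`),
acting linearly on weights: `μ ↦ μ - (⟨μ,α∨⟩ - np)·α` with `α = (2,-1)`. -/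
def reflAlpha (p n : ℤ) : Equiv.Perm (ℤ × ℤ) :=
  Function.Involutive.toPerm
    (fun μ => (μ.1 - 2 * (μ.1 - n * p), μ.2 + (μ.1 - n * p)))
    (by intro μ; obtain ⟨a, b⟩ := μ; simp only [Prod.mk.injEq]; constructor <;> ring)

/-- The affine reflection `s_{β, n p}` with `β = (-1,2)`, `⟨(x,y), β∨⟩ = y`. -/
def reflBeta (p n : ℤ) : Equiv.Perm (ℤ × ℤ) :=
  Function.Involutive.toPerm
    (fun μ => (μ.1 + (μ.2 - n * p), μ.2 - 2 * (μ.2 - n * p)))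
    (by intro μ; obtain ⟨a, b⟩ := μ; simp only [Prod.mk.injEq]; constructor <;> ring)

/-- The affine reflection `s_{γ, n p}` with `γ = (1,1)`, `⟨(x,y), γ∨⟩ = x + y`. -/
def reflGamma (p n : ℤ) : Equiv.Perm (ℤ × ℤ) :=
  Function.Involutive.toPerm
    (fun μ => (μ.1 - (μ.1 + μ.2 - n * p), μ.2 - (μ.1 + μ.2 - n * p)))
    (by intro μ; obtain ⟨a, b⟩ := μ; simp only [Prod.mk.injEq]; constructor <;> ring)

/-- The affine Weyl group `W_p` of `A₂`, generated by the reflections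
`s_{δ, np}` for `δ ∈ {α, β, γ}` and `n ∈ ℤ`. -/
def affineWeylGroup (p : ℤ) : Subgroup (Equiv.Perm (ℤ × ℤ)) :=
  Subgroup.closure
    {w | ∃ n : ℤ, w = reflAlpha p n ∨ w = reflBeta p n ∨ w = reflGamma p n}

/-- The `W`-invariant quadratic form on the weight lattice. -/
def Q2 (μ : ℤ × ℤ) : ℤ := μ.1 ^ 2 + μ.1 * μ.2 + μ.2 ^ 2

/-- The quadratic form `Q2` is invariant modulo `3p` under the affine Weyl group. -/
lemma q2_invariant (p : ℤ) : ∀ w ∈ affineWeylGroup p, ∀ μ : ℤ × ℤ,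
    (3 * p) ∣ (Q2 (w μ) - Q2 μ) := by
  intro w hw
  refine Subgroup.closure_induction ?_ ?_ ?_ ?_ hw
  · rintro w ⟨n, h | h | h⟩ μ <;> subst h <;> obtain ⟨a, b⟩ := μ <;>
      simp only [reflAlpha, reflBeta, reflGamma, Function.Involutive.toPerm, Equiv.coe_fn_mk, Q2]
    · exact ⟨n * (n * p - a), by ring⟩
    · exact ⟨n * (n * p - b), by ring⟩
    · exact ⟨n * (n * p - a - b), by ring⟩
  · intro μ; simp
  · intro u v _ _ hu hv μ
    have h1 := hu (v μ)
    have h2 := hv μ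
    have : (u * v) μ = u (v μ) := rfl
    rw [this]
    have := dvd_add h1 h2
    simpa using this
  · intro u _ hu μ
    have h := hu (u⁻¹ μ)
    rw [show u (u⁻¹ μ) = μ from u.apply_symm_apply μ] at h
    have := dvd_neg.mpr h
    simpa using this

/-- For `μ = (x,y)`: `μ - α ∈ W_p · μ` (dot action, i.e. `μ + ρ` and
`μ - α + ρ` in the same `W_p`-orbit for the linear action) iff `p ∣ x`, and
`μ - β ∈ W_p · μ` iff `p ∣ y`.  Here `ρ = (1,1)`, `μ - α + ρ = (x-1, y+2)`,
`μ - β + ρ = (x+2, y-1)`. -/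
theorem sub_root_mem_dot_orbit_iff (p : ℕ) (hp : p.Prime) (x y : ℤ) :
    ((∃ w ∈ affineWeylGroup (p : ℤ), w (x + 1, y + 1) = (x - 1, y + 2)) ↔ (p : ℤ) ∣ x) ∧
    ((∃ w ∈ affineWeylGroup (p : ℤ), w (x + 1, y + 1) = (x + 2, y - 1)) ↔ (p : ℤ) ∣ y) := by
  constructor
  · constructor
    · rintro ⟨w, hw, hwμ⟩
      have h := q2_invariant (p : ℤ) w hw (x + 1, y + 1)
      rw [hwμ] at h
      have h' : (3 * (p : ℤ)) ∣ (3 * (-x)) := by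
        convert h using 1
        simp only [Q2]
        ring
      obtain ⟨c, hc⟩ := h'
      exact ⟨-c, by linarith⟩
    · rintro ⟨k, hk⟩
      refine ⟨reflAlpha (p : ℤ) k, Subgroup.subset_closure ⟨k, Or.inl rfl⟩, ?_⟩
      simp only [reflAlpha, Function.Involutive.toPerm, Equiv.coe_fn_mk, Prod.mk.injEq]
      constructor <;> rw [hk] <;> ring
  · constructor
    · rintro ⟨w, hw, hwμ⟩
      have h := q2_invariant (p : ℤ) w hw (x + 1, y + 1)
      rw [hwμ] at h
      have h' : (3 * (p : ℤ)) ∣ (3 * (-y)) := by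
        convert h using 1
        simp only [Q2]
        ring
      obtain ⟨c, hc⟩ := h'
      exact ⟨-c, by linarith⟩
    · rintro ⟨k, hk⟩
      refine ⟨reflBeta (p : ℤ) k, Subgroup.subset_closure ⟨k, Or.inr (Or.inl rfl)⟩, ?_⟩
      simp only [reflBeta, Function.Involutive.toPerm, Equiv.coe_fn_mk, Prod.mk.injEq]
      constructor <;> rw [hk] <;> ring
end

section
/- Let G be a group scheme (or just consider modules over a ring), and let N be a module with a filtration 0 = N₀ ⊆ N₁ ⊆ ... ⊆ N_ℓ = N, and F a left-exact additive functor to modules with finite-length values, with right derived functors R^n F. If the character (or length/composition-factor multiset) of R^n F(N) equals the sum of those of R^n F(N_i/N_{i-1}), then for each i the natural map R^n F(N_{i-1}) → R^n F(N_i) is injective and R^n F(N_i)/R^n F(N_{i-1}) ≅ R^n F(N_i/N_{i-1}). -/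
/-!
For each exact sequence `A i → A (i + 1) → B (i + 1)` of finite-dimensional spaces,
`dim A (i + 1) = dim (range f) + dim (range g) ≤ dim A i + dim B (i + 1)`, with equality
exactly when `f` is injective and `g` surjective. Summing over `i < ℓ` telescopes (as `A 0 = 0`)
to `dim A ℓ ≤ ∑ dim B (i + 1)`, so the hypothesis forces equality at every step.
-/

open Module

namespace Function.Exact

variable {k M₁ M₂ M₃ : Type*} [DivisionRing k] [AddCommGroup M₁] [Module k M₁]
  [AddCommGroup M₂] [Module k M₂] [AddCommGroup M₃] [Module k M₃]
  {f : M₁ →ₗ[k] M₂} {g : M₂ →ₗ[k] M₃}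

theorem finrank_range_add_finrank_range [FiniteDimensional k M₂] (hfg : Exact f g) :
    finrank k (LinearMap.range f) + finrank k (LinearMap.range g) = finrank k M₂ := by
  rw [← g.finrank_range_add_finrank_ker, hfg.linearMap_ker_eq, add_comm]

variable [FiniteDimensional k M₁] [FiniteDimensional k M₂] [FiniteDimensional k M₃]

theorem finrank_le_add (hfg : Exact f g) : finrank k M₂ ≤ finrank k M₁ + finrank k M₃ :=
  hfg.finrank_range_add_finrank_range ▸
    add_le_add f.finrank_range_le (Submodule.finrank_le _)

theorem injective_and_surjective_of_finrank_eq (hfg : Exact f g)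
    (h : finrank k M₂ = finrank k M₁ + finrank k M₃) :
    Injective f ∧ Surjective g := by
  have hf := f.finrank_range_le
  have hg := Submodule.finrank_le (LinearMap.range g)
  have hsum := hfg.finrank_range_add_finrank_range
  have hker : finrank k (LinearMap.ker f) = 0 := by
    have := f.finrank_range_add_finrank_ker
    omega
  refine ⟨LinearMap.ker_eq_bot.mp (Submodule.finrank_eq_zero.mp hker),
    LinearMap.range_eq_top.mp (Submodule.eq_top_of_finrank_eq ?_)⟩
  omega

end Function.Exact

theorem succ_eq_add_of_le_add_of_eq_sum {M : Type*} [AddCommMonoid M] [PartialOrder M]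
    [IsOrderedCancelAddMonoid M] {u b : ℕ → M} {n : ℕ} (h0 : u 0 = 0)
    (hle : ∀ i < n, u (i + 1) ≤ u i + b i) (hn : u n = ∑ i ∈ Finset.range n, b i) :
    ∀ i < n, u (i + 1) = u i + b i := by
  have htelescope : ∑ i ∈ Finset.range n, u (i + 1) = ∑ i ∈ Finset.range n, (u i + b i) := by
    have := Finset.sum_range_succ' u n
    rw [Finset.sum_range_succ, h0, add_zero] at this
    rw [Finset.sum_add_distrib, ← hn, this]
  intro i hi
  exact (Finset.sum_eq_sum_iff_of_le fun j hj => hle j (Finset.mem_range.mp hj)).mp htelescope i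
    (Finset.mem_range.mpr hi)

/-- Abstract homological lemma (Lemma 6): let `N` have a filtration
`0 = N₀ ⊆ N₁ ⊆ ⋯ ⊆ N_ℓ = N` and `F` be a left-exact additive functor with
right derived functors `R^n F` taking finite-length (here: finite-dimensional)
values.  Writing `A i = R^n F(N_i)` (so `A 0 = 0`) and
`B (i+1) = R^n F(N_{i+1}/N_i)`, the long exact sequences give exact sequences
`A i → A (i+1) → B (i+1)`.  If `dim R^n F(N) = Σ_i dim R^n F(N_i/N_{i-1})`,
then each map `R^n F(N_{i-1}) → R^n F(N_i)` is injective, each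
`R^n F(N_i) → R^n F(N_i/N_{i-1})` is surjective, and
`R^n F(N_i)/R^n F(N_{i-1}) ≅ R^n F(N_i/N_{i-1})`. -/
theorem filtration_derived_functor_lemma (k : Type*) [Field k] (ℓ : ℕ)
    (A B : ℕ → Type*)
    [∀ i, AddCommGroup (A i)] [∀ i, Module k (A i)] [∀ i, FiniteDimensional k (A i)]
    [∀ i, AddCommGroup (B i)] [∀ i, Module k (B i)] [∀ i, FiniteDimensional k (B i)]
    (hA0 : Subsingleton (A 0))
    (f : ∀ i, A i →ₗ[k] A (i + 1)) (g : ∀ i, A (i + 1) →ₗ[k] B (i + 1))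
    (hex : ∀ i, Function.Exact (f i) (g i))
    (hdim : Module.finrank k (A ℓ) =
      ∑ i ∈ Finset.range ℓ, Module.finrank k (B (i + 1))) :
    ∀ i < ℓ, Function.Injective (f i) ∧ Function.Surjective (g i) ∧
      Nonempty ((A (i + 1) ⧸ LinearMap.range (f i)) ≃ₗ[k] B (i + 1)) := by
  intro i hi
  have hstep : finrank k (A (i + 1)) = finrank k (A i) + finrank k (B (i + 1)) :=
    succ_eq_add_of_le_add_of_eq_sum (u := fun i => finrank k (A i)) finrank_zero_of_subsingleton
      (fun j _ => (hex j).finrank_le_add) hdim i hi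
  obtain ⟨hinj, hsurj⟩ := (hex i).injective_and_surjective_of_finrank_eq hstep
  exact ⟨hinj, hsurj, ⟨(hex i).linearEquivOfSurjective hsurj⟩⟩
end
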